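/- arXiv:1301.2579 — 4 statements merged into one kernel-verified Lean document; each statement's English description precedes it below -/
import Mathlib

section
/- Let n ≥ 2 and let 𝔫 = ℝⁿ ⊕ 𝔰𝔬(n) ⊕ ℝⁿ be the Lie algebra with bracket [(x, A, z), (x', A', z')] = (0, x x'ᵀ − x' xᵀ, A x' − A' x). Then 𝔫 is nilpotent of class exactly 3: its lower central series satisfies [𝔫, 𝔫] = {0} ⊕ 𝔰𝔬(n) ⊕ ℝⁿ, [𝔫, [𝔫, 𝔫]] = {0} ⊕ {0} ⊕ ℝⁿ, and [𝔫, [𝔫, [𝔫, 𝔫]]] = 0. -/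
open Matrix

/-- `𝔰𝔬(n)`: the space of real skew-symmetric `n × n` matrices. -/
def soN (n : ℕ) : Submodule ℝ (Matrix (Fin n) (Fin n) ℝ) where
  carrier := {A | Aᵀ = -A}
  add_mem' := by
    intro a b ha hb
    simp only [Set.mem_setOf_eq] at *
    rw [Matrix.transpose_add, ha, hb, neg_add]
  zero_mem' := by simp
  smul_mem' := by
    intro c a ha
    simp only [Set.mem_setOf_eq] at *
    rw [Matrix.transpose_smul, ha, smul_neg]

/-- `𝔫 = ℝⁿ ⊕ 𝔰𝔬(n) ⊕ ℝⁿ`. -/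
abbrev Nilp (n : ℕ) := (Fin n → ℝ) × soN n × (Fin n → ℝ)

lemma wedge_mem_soN (n : ℕ) (x y : Fin n → ℝ) :
    vecMulVec x y - vecMulVec y x ∈ soN n := by
  show _ᵀ = _
  ext i j
  simp [vecMulVec_apply, mul_comm]

/-- The bracket `[(x, A, z), (x', A', z')] = (0, x x'ᵀ − x' xᵀ, A x' − A' x)`. -/
def nilpBracket {n : ℕ} (a b : Nilp n) : Nilp n :=
  (0,
   ⟨vecMulVec a.1 b.1 - vecMulVec b.1 a.1, wedge_mem_soN n a.1 b.1⟩,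
   (a.2.1 : Matrix (Fin n) (Fin n) ℝ).mulVec b.1
     - (b.2.1 : Matrix (Fin n) (Fin n) ℝ).mulVec a.1)

/-- `C¹𝔫 = [𝔫, 𝔫]`: the span of all brackets. -/
noncomputable def nilpC1 (n : ℕ) : Submodule ℝ (Nilp n) :=
  Submodule.span ℝ {z | ∃ a b : Nilp n, z = nilpBracket a b}

/-- `C²𝔫 = [𝔫, C¹𝔫]`. -/
noncomputable def nilpC2 (n : ℕ) : Submodule ℝ (Nilp n) :=
  Submodule.span ℝ {z | ∃ a : Nilp n, ∃ b ∈ nilpC1 n, z = nilpBracket a b}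

/-- `C³𝔫 = [𝔫, C²𝔫]`. -/
noncomputable def nilpC3 (n : ℕ) : Submodule ℝ (Nilp n) :=
  Submodule.span ℝ {z | ∃ a : Nilp n, ∃ b ∈ nilpC2 n, z = nilpBracket a b}

section aux
variable {n : ℕ}

noncomputable def wElt (n : ℕ) (x y : Fin n → ℝ) : soN n :=
  ⟨vecMulVec x y - vecMulVec y x, wedge_mem_soN n x y⟩

lemma coe_wElt (x y : Fin n → ℝ) :
    ((wElt n x y : soN n) : Matrix (Fin n) (Fin n) ℝ) = vecMulVec x y - vecMulVec y x := rfl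

lemma bracket_basic (x y : Fin n → ℝ) :
    nilpBracket ((x, 0, 0) : Nilp n) (y, 0, 0) = (0, wElt n x y, 0) := by
  simp only [nilpBracket, wElt, ZeroMemClass.coe_zero, Matrix.zero_mulVec, sub_zero, sub_self]

lemma wedge_mem_C1 (x y : Fin n → ℝ) : ((0, wElt n x y, 0) : Nilp n) ∈ nilpC1 n :=
  Submodule.subset_span ⟨(x,0,0), (y,0,0), (bracket_basic x y).symm⟩

lemma single_bracket (hn : 2 ≤ n) (i : Fin n) :
    ∃ a b : Nilp n, b.1 = 0 ∧ b ∈ nilpC1 n ∧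
      nilpBracket a b = ((0, 0, Pi.single i 1) : Nilp n) := by
  haveI : Nontrivial (Fin n) := Fin.nontrivial_iff_two_le.mpr hn
  obtain ⟨j, hj⟩ := exists_ne i
  refine ⟨(Pi.single j 1, 0, 0),
    (0, wElt n (Pi.single j 1) (Pi.single i 1), 0), rfl, wedge_mem_C1 _ _, ?_⟩
  refine Prod.ext rfl (Prod.ext (Subtype.ext ?_) ?_)
  · ext k l
    simp [nilpBracket, vecMulVec_apply]
  · show (nilpBracket _ _).2.2 = Pi.single i 1
    ext k
    simp [nilpBracket, coe_wElt, sub_mulVec, mulVec, vecMulVec_apply, dotProduct,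
      Pi.single_apply, hj.symm, Finset.mul_sum, mul_ite, ite_mul, Finset.sum_ite_eq,
      Finset.sum_ite_eq']

lemma third_mem (S : Submodule ℝ (Nilp n))
    (h : ∀ i : Fin n, ((0, 0, Pi.single i 1) : Nilp n) ∈ S) (v : Fin n → ℝ) :
    ((0, 0, v) : Nilp n) ∈ S := by
  have hv : ((0, 0, v) : Nilp n) = ∑ i : Fin n, v i • ((0, 0, Pi.single i 1) : Nilp n) := by
    refine Prod.ext ?_ (Prod.ext ?_ ?_)
    · simp [Prod.fst_sum]
    · simp [Prod.snd_sum, Prod.fst_sum]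
    · simp only [Prod.snd_sum, Prod.smul_mk]
      ext k
      simp [Finset.sum_apply, Pi.single_apply]
  rw [hv]
  exact Submodule.sum_mem S fun i _ => Submodule.smul_mem S _ (h i)

lemma skew_mem_C1 (A : soN n) : ((0, A, 0) : Nilp n) ∈ nilpC1 n := by
  have hskew : ∀ k l, (A : Matrix (Fin n) (Fin n) ℝ) l k
      = -(A : Matrix (Fin n) (Fin n) ℝ) k l := by
    intro k l
    have h2 : (A : Matrix (Fin n) (Fin n) ℝ)ᵀ = -(A : Matrix (Fin n) (Fin n) ℝ) := A.2
    have h3 := congrFun (congrFun h2 k) l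
    simpa using h3
  have hA : ((0, A, 0) : Nilp n) = ∑ i : Fin n, ∑ j : Fin n,
      ((A : Matrix (Fin n) (Fin n) ℝ) i j / 2) •
        ((0, wElt n (Pi.single i 1) (Pi.single j 1), 0) : Nilp n) := by
    refine Prod.ext ?_ (Prod.ext (Subtype.ext ?_) ?_)
    · simp [Prod.fst_sum]
    · push_cast [Prod.snd_sum, Prod.fst_sum]
      ext k l
      simp only [Prod.smul_mk, SetLike.val_smul, Finset.sum_apply, Matrix.sum_apply,
        Matrix.smul_apply, coe_wElt, Matrix.sub_apply, vecMulVec_apply, smul_eq_mul]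
      simp [Pi.single_apply, mul_sub, Finset.sum_sub_distrib, mul_ite, ite_mul, mul_zero,
        zero_mul, mul_one, Finset.sum_ite_eq, Finset.sum_ite_eq']
      rw [hskew l k]
      ring
    · simp [Prod.snd_sum]
  rw [hA]
  exact Submodule.sum_mem _ fun i _ => Submodule.sum_mem _ fun j _ =>
    Submodule.smul_mem _ _ (wedge_mem_C1 _ _)

end aux

/-- The Lie algebra `𝔫 = ℝⁿ ⊕ 𝔰𝔬(n) ⊕ ℝⁿ` with the bracket
`[(x, A, z), (x', A', z')] = (0, x x'ᵀ − x' xᵀ, A x' − A' x)` is nilpotent of class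
exactly `3`: its lower central series satisfies `[𝔫, 𝔫] = {0} ⊕ 𝔰𝔬(n) ⊕ ℝⁿ`,
`[𝔫, [𝔫, 𝔫]] = {0} ⊕ {0} ⊕ ℝⁿ` (which is nonzero) and `[𝔫, [𝔫, [𝔫, 𝔫]]] = 0`. -/
theorem nilp_lower_central_series (n : ℕ) (hn : 2 ≤ n) :
    nilpC1 n =
      (⊥ : Submodule ℝ (Fin n → ℝ)).prod (⊤ : Submodule ℝ (soN n × (Fin n → ℝ))) ∧
    nilpC2 n =
      (⊥ : Submodule ℝ (Fin n → ℝ)).prod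
        ((⊥ : Submodule ℝ (soN n)).prod (⊤ : Submodule ℝ (Fin n → ℝ))) ∧
    nilpC2 n ≠ ⊥ ∧
    nilpC3 n = ⊥ := by
  have hC1 : nilpC1 n =
      (⊥ : Submodule ℝ (Fin n → ℝ)).prod (⊤ : Submodule ℝ (soN n × (Fin n → ℝ))) := by
    apply le_antisymm
    · rw [nilpC1, Submodule.span_le]
      rintro z ⟨a, b, rfl⟩
      simp [Submodule.mem_prod, nilpBracket]
    · rintro ⟨x, A, v⟩ hmem
      rw [Submodule.mem_prod] at hmem
      obtain ⟨hx, -⟩ := hmem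
      rw [Submodule.mem_bot] at hx
      subst hx
      have hsplit : ((0, A, v) : Nilp n) = (0, A, 0) + (0, 0, v) := by
        refine Prod.ext ?_ (Prod.ext ?_ ?_) <;> simp
      rw [hsplit]
      refine Submodule.add_mem _ (skew_mem_C1 A) (third_mem _ ?_ v)
      intro i
      obtain ⟨a, b, -, -, hb⟩ := single_bracket hn i
      rw [← hb]
      exact Submodule.subset_span ⟨a, b, rfl⟩
  have hC2 : nilpC2 n =
      (⊥ : Submodule ℝ (Fin n → ℝ)).prod
        ((⊥ : Submodule ℝ (soN n)).prod (⊤ : Submodule ℝ (Fin n → ℝ))) := by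
    apply le_antisymm
    · rw [nilpC2, Submodule.span_le]
      rintro z ⟨a, b, hbC1, rfl⟩
      rw [hC1, Submodule.mem_prod] at hbC1
      have hb1 : b.1 = 0 := by simpa using hbC1.1
      refine Submodule.mem_prod.mpr ⟨?_, Submodule.mem_prod.mpr ⟨?_, trivial⟩⟩
      · simp [nilpBracket]
      · rw [Submodule.mem_bot]
        apply Subtype.ext
        show ((nilpBracket a b).2.1 : Matrix (Fin n) (Fin n) ℝ) = 0
        ext k l
        simp [nilpBracket, hb1, vecMulVec_apply]
    · rintro ⟨x, A, v⟩ hmem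
      rw [Submodule.mem_prod] at hmem
      obtain ⟨hx, hmem2⟩ := hmem
      rw [Submodule.mem_prod] at hmem2
      obtain ⟨hA, -⟩ := hmem2
      rw [Submodule.mem_bot] at hx hA
      subst hx
      subst hA
      refine third_mem _ ?_ v
      intro i
      obtain ⟨a, b, -, hbC1, hb⟩ := single_bracket hn i
      rw [← hb]
      exact Submodule.subset_span ⟨a, b, hbC1, rfl⟩
  have hne : nilpC2 n ≠ ⊥ := by
    rw [hC2]
    intro h
    have h0 : ((0, 0, Pi.single (⟨0, by omega⟩ : Fin n) (1:ℝ)) : Nilp n)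
        ∈ (⊥ : Submodule ℝ (Nilp n)) := by
      rw [← h]
      exact Submodule.mem_prod.mpr ⟨by simp, Submodule.mem_prod.mpr ⟨by simp, trivial⟩⟩
    rw [Submodule.mem_bot] at h0
    have h1 := congrArg (fun p : Nilp n => p.2.2 ⟨0, by omega⟩) h0
    simp [Pi.single_apply] at h1
  have hC3 : nilpC3 n = ⊥ := by
    rw [nilpC3, Submodule.span_eq_bot]
    rintro z ⟨a, b, hb, rfl⟩
    rw [hC2, Submodule.mem_prod] at hb
    obtain ⟨hb1, hb2⟩ := hb
    rw [Submodule.mem_prod] at hb2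
    obtain ⟨hb2, -⟩ := hb2
    rw [Submodule.mem_bot] at hb1 hb2
    refine Prod.ext rfl (Prod.ext (Subtype.ext ?_) ?_)
    · show ((nilpBracket a b).2.1 : Matrix (Fin n) (Fin n) ℝ) = ((0 : Nilp n).2.1 : Matrix (Fin n) (Fin n) ℝ)
      ext k l
      simp [nilpBracket, hb1, vecMulVec_apply]
    · show (nilpBracket a b).2.2 = 0
      simp [nilpBracket, hb1, hb2]
  exact ⟨hC1, hC2, hne, hC3⟩
end

section
/- Let n ≥ 2 and let 𝔫 = ℝⁿ ⊕ 𝔰𝔬(n) ⊕ ℝⁿ be the Lie algebra with bracket [(x, A, z), (x', A', z')] = (0, x x'ᵀ − x' xᵀ, A x' − A' x). Then 𝔫 is generated as a Lie algebra by the n elements Nᵢ = (eᵢ, 0, 0), i = 1, …, n; that is, the smallest Lie subalgebra of 𝔫 containing all the Nᵢ is 𝔫 itself. -/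
/-! The brackets `[Nᵢ, Nⱼ] = (0, eᵢ ∧ eⱼ, 0)` span the `𝔰𝔬(n)` summand, because a skew-symmetric
`A` equals `½ ∑ᵢⱼ Aᵢⱼ (eᵢ ∧ eⱼ)`. Since `n ≥ 2`, every `i` has some `j ≠ i`, and then
`[(0, eᵢ ∧ eⱼ, 0), Nⱼ] = (0, 0, (eᵢ ∧ eⱼ) eⱼ) = (0, 0, eᵢ)`, so the last summand is reached too. -/

open Matrix

/-- `Nᵢ = (eᵢ, 0, 0)`, where `eᵢ` is the standard basis of `ℝⁿ`. -/
def NGen (n : ℕ) (i : Fin n) : Nilp n := (Pi.single i 1, 0, 0)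

open Submodule

lemma Submodule.apply_mem_of_span_range_eq_top {R M N ι : Type*} [Semiring R]
    [AddCommMonoid M] [AddCommMonoid N] [Module R M] [Module R N] {f : M →ₗ[R] N}
    {S : Submodule R N} {v : ι → M} (hv : span R (Set.range v) = ⊤) (h : ∀ i, f (v i) ∈ S)
    (m : M) : f m ∈ S := by
  have hrange : map f (span R (Set.range v)) ≤ S :=
    (map_span_le f _ S).mpr (Set.forall_mem_range.mpr h)
  rw [hv, map_top] at hrange
  exact hrange (LinearMap.mem_range_self f m)

lemma Matrix.sum_smul_single_sub_single {ι R : Type*} [Fintype ι] [DecidableEq ι]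
    [CommRing R] (A : Matrix ι ι R) :
    ∑ i, ∑ j, A i j • (single i j (1 : R) - single j i 1) = A - Aᵀ := by
  simp only [smul_sub, Finset.sum_sub_distrib, smul_single, smul_eq_mul, mul_one]
  rw [← matrix_eq_sum_single, sub_right_inj, matrix_eq_sum_single Aᵀ, Finset.sum_comm]
  rfl

lemma Matrix.vecMulVec_sub_vecMulVec_mulVec {ι R : Type*} [Fintype ι] [CommRing R]
    (x y w : ι → R) :
    (vecMulVec x y - vecMulVec y x) *ᵥ w = (y ⬝ᵥ w) • x - (x ⬝ᵥ w) • y := by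
  simp only [sub_mulVec, vecMulVec_mulVec, op_smul_eq_smul]

def soWedge {n : ℕ} (x y : Fin n → ℝ) : soN n :=
  ⟨vecMulVec x y - vecMulVec y x, wedge_mem_soN n x y⟩

lemma span_range_soWedge_single (n : ℕ) :
    span ℝ (Set.range fun p : Fin n × Fin n ↦ soWedge (Pi.single p.1 1) (Pi.single p.2 1)) =
      ⊤ := by
  refine eq_top_iff'.mpr fun A ↦ ?_
  have h2A : (2 : ℝ) • A = ∑ i, ∑ j, (A : Matrix (Fin n) (Fin n) ℝ) i j •
      soWedge (Pi.single i 1) (Pi.single j 1) := by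
    have hskew : (A : Matrix (Fin n) (Fin n) ℝ)ᵀ = -A := A.2
    apply Subtype.ext
    simp only [Submodule.coe_sum, Submodule.coe_smul, soWedge,
      ← single_eq_single_vecMulVec_single, sum_smul_single_sub_single, hskew, sub_neg_eq_add,
      two_smul, Submodule.coe_add]
  have hhalf : A = (2 : ℝ)⁻¹ • ((2 : ℝ) • A) := by rw [inv_smul_smul₀ two_ne_zero]
  rw [hhalf, h2A]
  exact smul_mem _ _ <| sum_mem fun i _ ↦ sum_mem fun j _ ↦
    smul_mem _ _ (subset_span ⟨(i, j), rfl⟩)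

lemma nilpBracket_NGen_NGen {n : ℕ} (i j : Fin n) :
    nilpBracket (NGen n i) (NGen n j) = (0, soWedge (Pi.single i 1) (Pi.single j 1), 0) := by
  simp only [nilpBracket, NGen, soWedge, ZeroMemClass.coe_zero, zero_mulVec, sub_self]

lemma nilpBracket_soWedge_NGen {n : ℕ} {i j : Fin n} (hij : i ≠ j) :
    nilpBracket (0, soWedge (Pi.single i 1) (Pi.single j 1), 0) (NGen n j) =
      (0, 0, Pi.single i 1) := by
  simp only [nilpBracket, NGen, soWedge, ZeroMemClass.coe_zero, zero_vecMulVec, vecMulVec_zero,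
    sub_self, zero_mulVec, sub_zero, vecMulVec_sub_vecMulVec_mulVec, dotProduct_single,
    Pi.single_eq_same, Pi.single_eq_of_ne hij.symm, mul_one, one_smul, zero_smul]
  rfl

/-- The Lie algebra `𝔫 = ℝⁿ ⊕ 𝔰𝔬(n) ⊕ ℝⁿ` with bracket
`[(x, A, z), (x', A', z')] = (0, x x'ᵀ − x' xᵀ, A x' − A' x)` is generated, as a Lie
algebra, by the `n` elements `Nᵢ = (eᵢ, 0, 0)`: every subspace of `𝔫` that is closed
under the bracket (i.e. every Lie subalgebra) and contains all the `Nᵢ` is `𝔫` itself. -/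
theorem nilp_generated_by_N (n : ℕ) (hn : 2 ≤ n) :
    ∀ S : Submodule ℝ (Nilp n),
      (∀ a ∈ S, ∀ b ∈ S, nilpBracket a b ∈ S) →
      (∀ i : Fin n, NGen n i ∈ S) →
      S = ⊤ := by
  intro S hS hN
  have : Nontrivial (Fin n) := Fin.nontrivial_iff_two_le.mpr hn
  have hx (x : Fin n → ℝ) : ((x, 0, 0) : Nilp n) ∈ S :=
    apply_mem_of_span_range_eq_top (f := LinearMap.inl ℝ _ _) (Pi.basisFun ℝ (Fin n)).span_eq
      (fun i ↦ by rw [Pi.basisFun_apply]; exact hN i) x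
  have hW (i j : Fin n) : ((0, soWedge (Pi.single i 1) (Pi.single j 1), 0) : Nilp n) ∈ S :=
    nilpBracket_NGen_NGen i j ▸ hS _ (hN i) _ (hN j)
  have hA (A : soN n) : ((0, A, 0) : Nilp n) ∈ S :=
    apply_mem_of_span_range_eq_top (f := LinearMap.inr ℝ _ _ ∘ₗ LinearMap.inl ℝ _ _)
      (span_range_soWedge_single n) (fun p ↦ hW p.1 p.2) A
  have hz (z : Fin n → ℝ) : ((0, 0, z) : Nilp n) ∈ S := by
    refine apply_mem_of_span_range_eq_top (f := LinearMap.inr ℝ _ _ ∘ₗ LinearMap.inr ℝ _ _)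
      (Pi.basisFun ℝ (Fin n)).span_eq (fun i ↦ ?_) z
    obtain ⟨j, hji⟩ := exists_ne i
    rw [Pi.basisFun_apply, LinearMap.comp_apply, LinearMap.inr_apply, LinearMap.inr_apply,
      ← nilpBracket_soWedge_NGen hji.symm]
    exact hS _ (hW i j) _ (hN j)
  refine eq_top_iff'.mpr fun ⟨x, A, z⟩ ↦ ?_
  have hsplit : ((x, A, z) : Nilp n) = (x, 0, 0) + (0, A, 0) + (0, 0, z) := by simp
  exact hsplit ▸ add_mem (add_mem (hx x) (hA A)) (hz z)
end

section
/- Let V be a real inner product space, n ≥ 3, and let W₁, …, Wₙ ∈ V be linearly independent vectors such that for every index j and all indices i, k different from j one has ⟨Wᵢ, Wⱼ⟩Wᵢ − ⟨Wᵢ, Wᵢ⟩Wⱼ = ⟨Wₖ, Wⱼ⟩Wₖ − ⟨Wₖ, Wₖ⟩Wⱼ. Then ⟨Wᵢ, Wⱼ⟩ = 0 for all i ≠ j, and ‖Wᵢ‖ = ‖Wⱼ‖ for all i, j. -/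
/-! For distinct `i, j` choose a third index `k`. The hypothesis
with `j` in the middle is a linear relation among `Wᵢ, Wⱼ, Wₖ`, whose coefficients are
`⟪Wᵢ, Wⱼ⟫`, `⟪Wₖ, Wₖ⟫ - ⟪Wᵢ, Wᵢ⟫` and `-⟪Wₖ, Wⱼ⟫`; by linear independence they all vanish.
Putting `k` in the middle instead gives `⟪Wᵢ, Wᵢ⟫ = ⟪Wⱼ, Wⱼ⟫`. -/

theorem LinearIndependent.eq_zero_of_smul_add_smul_add_smul_eq_zero
    {ι R M : Type*} [Ring R] [AddCommGroup M] [Module R M] {v : ι → M}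
    (hv : LinearIndependent R v) {i j k : ι} (hij : i ≠ j) (hik : i ≠ k) (hjk : j ≠ k)
    {a b c : R} (h : a • v i + b • v j + c • v k = 0) : a = 0 ∧ b = 0 ∧ c = 0 := by
  have hinj : Function.Injective ![i, j, k] := by
    intro x y
    fin_cases x <;> fin_cases y <;> simp [hij, hik, hjk, hij.symm, hik.symm, hjk.symm]
  have := Fintype.linearIndependent_iff.mp (hv.comp _ hinj) ![a, b, c]
    (by simpa [Fin.sum_univ_three] using h)
  exact ⟨this 0, this 1, this 2⟩

theorem LinearIndependent.eq_zero_of_smul_sub_smul_eq_smul_sub_smul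
    {ι R M : Type*} [Ring R] [AddCommGroup M] [Module R M] {v : ι → M}
    (hv : LinearIndependent R v) {i j k : ι} (hij : i ≠ j) (hik : i ≠ k) (hjk : j ≠ k)
    {a b c d : R} (h : a • v i - b • v j = c • v k - d • v j) : a = 0 ∧ c = 0 ∧ b = d := by
  have hrel : a • v i + (d - b) • v j + (-c) • v k = 0 := by
    rw [← sub_eq_zero] at h
    rw [← h, sub_smul, neg_smul]
    abel
  obtain ⟨ha, hdb, hc⟩ := hv.eq_zero_of_smul_add_smul_add_smul_eq_zero hij hik hjk hrel
  exact ⟨ha, neg_eq_zero.mp hc, (sub_eq_zero.mp hdb).symm⟩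

/-- Let `V` be a real inner product space, `n ≥ 3`, and let `W₁, …, Wₙ ∈ V` be linearly
independent vectors such that for every index `j` and all indices `i, k` different
from `j` one has `⟪Wᵢ, Wⱼ⟫ Wᵢ − ⟪Wᵢ, Wᵢ⟫ Wⱼ = ⟪Wₖ, Wⱼ⟫ Wₖ − ⟪Wₖ, Wₖ⟫ Wⱼ`.
Then `⟪Wᵢ, Wⱼ⟫ = 0` for all `i ≠ j`, and `‖Wᵢ‖ = ‖Wⱼ‖` for all `i, j`. -/
theorem rolling_frame_orthogonal_equal_norms
    {V : Type*} [NormedAddCommGroup V] [InnerProductSpace ℝ V]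
    (n : ℕ) (hn : 3 ≤ n) (W : Fin n → V) (hW : LinearIndependent ℝ W)
    (h : ∀ j i k : Fin n, i ≠ j → k ≠ j →
      (inner ℝ (W i) (W j) : ℝ) • W i - (inner ℝ (W i) (W i) : ℝ) • W j =
        (inner ℝ (W k) (W j) : ℝ) • W k - (inner ℝ (W k) (W k) : ℝ) • W j) :
    (∀ i j : Fin n, i ≠ j → (inner ℝ (W i) (W j) : ℝ) = 0) ∧
    (∀ i j : Fin n, ‖W i‖ = ‖W j‖) := by
  have third (i j : Fin n) : ∃ k, k ≠ i ∧ k ≠ j :=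
    ENat.exists_ne_ne_of_three_le (by simpa using hn) i j
  have relation {i j k : Fin n} (hij : i ≠ j) (hki : k ≠ i) (hkj : k ≠ j) :
      inner ℝ (W i) (W j) = (0 : ℝ) ∧ inner ℝ (W i) (W i) = (inner ℝ (W k) (W k) : ℝ) := by
    obtain ⟨hWij, -, hWii⟩ :=
      hW.eq_zero_of_smul_sub_smul_eq_smul_sub_smul hij hki.symm hkj.symm (h j i k hij hkj)
    exact ⟨hWij, hWii⟩
  refine ⟨fun i j hij => ?_, fun i j => ?_⟩
  · obtain ⟨k, hki, hkj⟩ := third i j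
    exact (relation hij hki hkj).1
  · obtain rfl | hij := eq_or_ne i j
    · rfl
    obtain ⟨k, hki, hkj⟩ := third i j
    rw [norm_eq_sqrt_real_inner, norm_eq_sqrt_real_inner, (relation hki.symm hij.symm hkj.symm).2]
end

section
/- Let V be a real vector space, n ≥ 3, and let W₁, …, Wₙ ∈ V be linearly independent. Let α : {1,…,n}³ → ℝ, written (a, i, j) ↦ αᵃᵢⱼ, satisfy αᵃᵢⱼ = −αᵃⱼᵢ for all a, i, j, and suppose that for all indices i, j, k, l one has αˡᵢⱼ Wₖ − αᵏᵢⱼ Wₗ − αʲₖₗ Wᵢ + αⁱₖₗ Wⱼ = 0. Then αᵃᵢⱼ = 0 for all a, i, j. -/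
private lemma three_indep {V : Type*} [AddCommGroup V] [Module ℝ V]
    {n : ℕ} {W : Fin n → V} (hW : LinearIndependent ℝ W)
    {p q r : Fin n} (hpq : p ≠ q) (hpr : p ≠ r) (hqr : q ≠ r)
    {c d e : ℝ} (hsum : c • W p + d • W q + e • W r = 0) :
    c = 0 ∧ d = 0 ∧ e = 0 := by
  rw [Fintype.linearIndependent_iff] at hW
  set g : Fin n → ℝ := fun x =>
    (if x = p then c else 0) + (if x = q then d else 0) + (if x = r then e else 0) with hg
  have hz : ∀ x, g x = 0 := by
    apply hW
    have : ∑ x, g x • W x = c • W p + d • W q + e • W r := by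
      simp only [hg, add_smul, ite_smul, zero_smul, Finset.sum_add_distrib,
        Finset.sum_ite_eq', Finset.mem_univ, if_true]
    rw [this]; exact hsum
  have h1 := hz p
  have h2 := hz q
  have h3 := hz r
  simp only [hg, if_pos rfl, if_neg hpq, if_neg hpr, if_neg hqr,
    if_neg (Ne.symm hpq), if_neg (Ne.symm hpr), if_neg (Ne.symm hqr)] at h1 h2 h3
  simp only [if_true] at h1 h2 h3
  exact ⟨by linarith, by linarith, by linarith⟩

/-- Let `V` be a real vector space, `n ≥ 3`, and `W₁, …, Wₙ ∈ V` linearly independent.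
Let `α : {1,…,n}³ → ℝ`, `(a, i, j) ↦ αᵃᵢⱼ`, satisfy `αᵃᵢⱼ = −αᵃⱼᵢ` for all `a, i, j`,
and suppose that for all indices `i, j, k, l` one has
`αˡᵢⱼ Wₖ − αᵏᵢⱼ Wₗ − αʲₖₗ Wᵢ + αⁱₖₗ Wⱼ = 0`. Then `αᵃᵢⱼ = 0` for all `a, i, j`. -/
theorem rolling_structure_functions_vanish
    {V : Type*} [AddCommGroup V] [Module ℝ V]
    (n : ℕ) (hn : 3 ≤ n) (W : Fin n → V) (hW : LinearIndependent ℝ W)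
    (α : Fin n → Fin n → Fin n → ℝ)
    (hanti : ∀ a i j : Fin n, α a i j = -α a j i)
    (h : ∀ i j k l : Fin n,
      α l i j • W k - α k i j • W l - α j k l • W i + α i k l • W j = 0) :
    ∀ a i j : Fin n, α a i j = 0 := by
  -- key: for pairwise distinct a, i, j we get relations from h i j i a
  have key : ∀ a i j : Fin n, a ≠ i → a ≠ j → i ≠ j →
      α a i j = α j i a ∧ α i i j = 0 ∧ α i i a = 0 := by
    intro a i j hai haj hij
    have hrel := h i j i a
    have hrel' : (α a i j - α j i a) • W i + (-α i i j) • W a + (α i i a) • W j = 0 := by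
      rw [← hrel]; module
    have := three_indep hW (Ne.symm hai) hij haj hrel'
    exact ⟨by linarith [this.1], by linarith [this.2.1], this.2.2⟩
  -- the third-index existence
  have third : ∀ i j : Fin n, ∃ a : Fin n, a ≠ i ∧ a ≠ j := by
    intro i j
    have hcard : ({i, j}ᶜ : Finset (Fin n)).Nonempty := by
      rw [← Finset.card_pos, Finset.card_compl]
      have : ({i, j} : Finset (Fin n)).card ≤ 2 :=
        (Finset.card_insert_le _ _).trans (by simp)
      simp only [Fintype.card_fin]
      omega
    obtain ⟨a, ha⟩ := hcard
    simp only [Finset.mem_compl, Finset.mem_insert, Finset.mem_singleton, not_or] at ha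
    exact ⟨a, ha.1, ha.2⟩
  -- B: α i i j = 0 for i ≠ j
  have B : ∀ i j : Fin n, i ≠ j → α i i j = 0 := by
    intro i j hij
    obtain ⟨a, hai, haj⟩ := third i j
    exact (key a i j hai haj hij).2.1
  -- sym: α a i j = α j i a for pairwise distinct
  have sym : ∀ a i j : Fin n, a ≠ i → a ≠ j → i ≠ j → α a i j = α j i a :=
    fun a i j hai haj hij => (key a i j hai haj hij).1
  intro a i j
  by_cases hij : i = j
  · subst hij
    have := hanti a i i; linarith
  by_cases hai : a = i
  · subst hai; exact B a j hij
  by_cases haj : a = j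
  · subst haj
    have := hanti a i a
    have := B a i hai
    linarith
  -- all distinct
  have e1 : α a i j = α j i a := sym a i j hai haj hij
  have e2 : α j i a = -α j a i := hanti j i a
  have e3 : α j a i = α i a j := sym j a i (Ne.symm haj) (Ne.symm hij) hai
  have e4 : α i a j = -α i j a := hanti i a j
  have e5 : α i j a = α a j i := sym i j a hij (Ne.symm hai) (Ne.symm haj)
  have e6 : α a j i = -α a i j := hanti a j i
  linarith
end
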